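/- arXiv:0811.1315 — 2 statements merged into one kernel-verified Lean document; each statement's English description precedes it below -/
import Mathlib

section
/- The gradient of the function C₋₃(a,b) = 2(2b − a + 12)/((b+3)(b−2a−3)(b−a+3)(b+a−3)) vanishes at (a,b) = (0, √13 − 4), and this point satisfies the constraints b + 3 > 0, b − 2a − 3 < 0, b − a + 3 > 0, b + a − 3 < 0. -/
/-!
On the symmetry line `a = 0` the denominator of `C₋₃` is `(b² - 9)²`, and both partial
derivatives there are rational multiples of `b² + 8b + 3`, whose root in `(-3, 3)` is `√13 - 4`.
-/

/-- The paper's `C₋₃(a, b)`. -/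
noncomputable def leadingLaurentCoeff (a b : ℝ) : ℝ :=
  2 * (2 * b - a + 12) / ((b + 3) * (b - 2 * a - 3) * (b - a + 3) * (b + a - 3))

lemma hasDerivAt_leadingLaurentCoeff_left (b : ℝ) (hb : b ^ 2 ≠ 9) :
    HasDerivAt (fun a => leadingLaurentCoeff a b) (6 * (b ^ 2 + 8 * b + 3) / (b ^ 2 - 9) ^ 3) 0 := by
  have hb' : b ^ 2 - 9 ≠ 0 := sub_ne_zero.mpr hb
  have hid : HasDerivAt (fun a : ℝ => a) 1 0 := hasDerivAt_id' 0
  have hnum : HasDerivAt (fun a : ℝ => 2 * (2 * b - a + 12)) (-2) 0 :=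
    (((hid.const_sub (2 * b)).add_const 12).const_mul 2).congr_deriv (by ring)
  have hden : HasDerivAt (fun a : ℝ => (b + 3) * (b - 2 * a - 3) * (b - a + 3) * (b + a - 3))
      (-2 * b * (b ^ 2 - 9)) 0 :=
    (((((hid.const_mul 2).const_sub b).sub_const 3).const_mul (b + 3)).mul
      ((hid.const_sub b).add_const 3) |>.mul ((hid.const_add b).sub_const 3)).congr_deriv
      (by simp only [Pi.mul_apply]; ring)
  have hden0 : (b + 3) * (b - 2 * 0 - 3) * (b - 0 + 3) * (b + 0 - 3) = (b ^ 2 - 9) ^ 2 := by ring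
  refine (hnum.fun_div hden (hden0 ▸ pow_ne_zero 2 hb')).congr_deriv ?_
  rw [hden0]
  field_simp
  ring

lemma hasDerivAt_leadingLaurentCoeff_right (b : ℝ) (hb : b ^ 2 ≠ 9) :
    HasDerivAt (fun b => leadingLaurentCoeff 0 b) (-12 * (b ^ 2 + 8 * b + 3) / (b ^ 2 - 9) ^ 3) b := by
  have hb' : b ^ 2 - 9 ≠ 0 := sub_ne_zero.mpr hb
  have hid : HasDerivAt (fun b : ℝ => b) 1 b := hasDerivAt_id' b
  have hnum : HasDerivAt (fun b : ℝ => 2 * (2 * b - 0 + 12)) 4 b :=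
    ((((hid.const_mul 2).sub_const 0).add_const 12).const_mul 2).congr_deriv (by ring)
  have hden : HasDerivAt (fun b : ℝ => (b + 3) * (b - 2 * 0 - 3) * (b - 0 + 3) * (b + 0 - 3))
      (4 * b * (b ^ 2 - 9)) b :=
    (((hid.add_const 3).mul ((hid.sub_const (2 * 0)).sub_const 3)).mul
      ((hid.sub_const 0).add_const 3) |>.mul ((hid.add_const 0).sub_const 3)).congr_deriv
      (by simp only [Pi.mul_apply]; ring)
  have hden0 : (b + 3) * (b - 2 * 0 - 3) * (b - 0 + 3) * (b + 0 - 3) = (b ^ 2 - 9) ^ 2 := by ring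
  refine (hnum.fun_div hden (hden0 ▸ pow_ne_zero 2 hb')).congr_deriv ?_
  rw [hden0]
  field_simp
  ring

lemma sqrt_thirteen_sub_four_quadratic_eq : (√13 - 4) ^ 2 + 8 * (√13 - 4) + 3 = 0 := by
  have h : √13 ^ 2 = 13 := Real.sq_sqrt (by norm_num)
  linear_combination h

lemma three_lt_sqrt_thirteen : 3 < √13 := by
  rw [Real.lt_sqrt (by norm_num)]; norm_num

lemma sqrt_thirteen_lt_four : √13 < 4 := by
  rw [Real.sqrt_lt' (by norm_num)]; norm_num

/-- The gradient of `C₋₃(a,b) = 2(2b - a + 12)/((b+3)(b-2a-3)(b-a+3)(b+a-3))` vanishes at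
`(a, b) = (0, √13 - 4)`, and this point satisfies `b + 3 > 0`, `b - 2a - 3 < 0`,
`b - a + 3 > 0`, `b + a - 3 < 0`. -/
theorem stmt_13 :
    let b₀ : ℝ := Real.sqrt 13 - 4
    deriv (fun a : ℝ =>
        2 * (2 * b₀ - a + 12) /
          ((b₀ + 3) * (b₀ - 2 * a - 3) * (b₀ - a + 3) * (b₀ + a - 3))) 0 = 0 ∧
    deriv (fun b : ℝ =>
        2 * (2 * b - 0 + 12) /
          ((b + 3) * (b - 2 * 0 - 3) * (b - 0 + 3) * (b + 0 - 3))) b₀ = 0 ∧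
    b₀ + 3 > 0 ∧ b₀ - 2 * 0 - 3 < 0 ∧ b₀ - 0 + 3 > 0 ∧ b₀ + 0 - 3 < 0 := by
  intro b₀
  have hlo := three_lt_sqrt_thirteen
  have hhi := sqrt_thirteen_lt_four
  have hb : b₀ ^ 2 ≠ 9 := by nlinarith
  have hroot : b₀ ^ 2 + 8 * b₀ + 3 = 0 := sqrt_thirteen_sub_four_quadratic_eq
  refine ⟨?_, ?_, by linarith, by linarith, by linarith, by linarith⟩
  · exact (hasDerivAt_leadingLaurentCoeff_left b₀ hb).deriv.trans (by rw [hroot]; simp)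
  · exact (hasDerivAt_leadingLaurentCoeff_right b₀ hb).deriv.trans (by rw [hroot]; simp)
end

section
/- At the volume-minimizing point (a₀, b₀) = (0, √13 − 4), the partial derivative with respect to a of C₋₁(a,b) = −(6b² + 2a²b − 6ab − 18b − a³ + 9a² + 9a − 162)/(6(b+3)(b−2a−3)(b−a+3)(b+a−3)) equals 4(137√13 − 491)/((√13 − 7)⁴(√13 − 1)³), which is nonzero. -/
/-! Numerator and denominator of `C₋₁(·, b)` are cubics in `a`, so the quotient rule at `a = 0`
gives `∂ₐC₋₁(0, b) = -(2b³ - 9b² - 90b - 27) / (2(b² - 9)³)`. At `b₀ = √13 - 4` one has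
`b₀ + 3 = √13 - 1` and `b₀ - 3 = √13 - 7`, and the rest is arithmetic in `ℚ(√13)`. -/

lemma hasDerivAt_cubic_zero (c₀ c₁ c₂ c₃ : ℝ) :
    HasDerivAt (fun x : ℝ => c₀ + c₁ * x + c₂ * x ^ 2 + c₃ * x ^ 3) c₁ 0 := by
  have h := (((hasDerivAt_id (0 : ℝ)).const_mul c₁).const_add c₀).add
    (((hasDerivAt_pow 2 (0 : ℝ)).const_mul c₂).add ((hasDerivAt_pow 3 (0 : ℝ)).const_mul c₃))
  refine (h.congr_deriv (by simp)).congr_of_eventuallyEq (.of_forall fun x => ?_)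
  simp only [Pi.add_apply, id]
  ring

noncomputable def cMinusOne (a b : ℝ) : ℝ :=
  -(6 * b ^ 2 + 2 * a ^ 2 * b - 6 * a * b - 18 * b - a ^ 3 + 9 * a ^ 2 + 9 * a - 162)
    / (6 * (b + 3) * (b - 2 * a - 3) * (b - a + 3) * (b + a - 3))

lemma hasDerivAt_cMinusOne_zero {b : ℝ} (hb : b ^ 2 ≠ 9) :
    HasDerivAt (fun a => cMinusOne a b)
      (-(2 * b ^ 3 - 9 * b ^ 2 - 90 * b - 27) / (2 * (b ^ 2 - 9) ^ 3)) 0 := by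
  have hb' : b ^ 2 - 9 ≠ 0 := sub_ne_zero.mpr hb
  have hnum := hasDerivAt_cubic_zero (-6 * b ^ 2 + 18 * b + 162) (6 * b - 9) (-2 * b - 9) 1
  have hden := hasDerivAt_cubic_zero (6 * (b ^ 2 - 9) ^ 2) (-12 * b * (b ^ 2 - 9))
    (-6 * (b + 3) * (b + 9)) (12 * (b + 3))
  refine ((hnum.div hden (by simpa using hb')).congr_deriv ?_).congr_of_eventuallyEq
    (.of_forall fun a => ?_)
  · field_simp
    ring
  · unfold cMinusOne
    simp only [Pi.div_apply]
    congr 1 <;> ring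

/-- At the volume-minimizing point `(a₀, b₀) = (0, √13 - 4)`, the partial derivative in `a`
of `C₋₁(a,b) = -(6b² + 2a²b - 6ab - 18b - a³ + 9a² + 9a - 162)/(6(b+3)(b-2a-3)(b-a+3)(b+a-3))`
equals `4(137√13 - 491)/((√13 - 7)⁴(√13 - 1)³)`, which is nonzero. -/
theorem stmt_14 :
    let b₀ : ℝ := Real.sqrt 13 - 4
    deriv (fun a : ℝ =>
        -(6 * b₀ ^ 2 + 2 * a ^ 2 * b₀ - 6 * a * b₀ - 18 * b₀ - a ^ 3 + 9 * a ^ 2 + 9 * a - 162)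
          / (6 * (b₀ + 3) * (b₀ - 2 * a - 3) * (b₀ - a + 3) * (b₀ + a - 3))) 0
      = 4 * (137 * Real.sqrt 13 - 491) /
          ((Real.sqrt 13 - 7) ^ 4 * (Real.sqrt 13 - 1) ^ 3) ∧
    4 * (137 * Real.sqrt 13 - 491) /
        ((Real.sqrt 13 - 7) ^ 4 * (Real.sqrt 13 - 1) ^ 3) ≠ 0 := by
  intro b₀
  set s := Real.sqrt 13
  have hs : s ^ 2 = 13 := Real.sq_sqrt (by norm_num)
  have hs_lt : s < 4 := by nlinarith [Real.sqrt_nonneg 13]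
  have hs_gt : 3 < s := by nlinarith [Real.sqrt_nonneg 13]
  have h7 : s - 7 ≠ 0 := by linarith
  have h1 : s - 1 ≠ 0 := by linarith
  have hnum : 137 * s - 491 ≠ 0 := by nlinarith
  have hb₀ : b₀ ^ 2 - 9 = (s - 7) * (s - 1) := by ring
  refine ⟨?_, by positivity⟩
  change deriv (fun a => cMinusOne a b₀) 0 = _
  rw [(hasDerivAt_cMinusOne_zero (by nlinarith)).deriv, hb₀]
  field_simp
  linear_combination (-2 * s ^ 2 + 47 * s - 335) * hs
end
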